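/- Let Δ⁰ = 0 and, for k = 1,…,K, let r^k and h^k be bounded measurable functions with esssup_α |r^k| ≤ G and esssup_α |h^k − (Δ^{k−1} + r^k)| ≤ (1−γ)·esssup_α |Δ^{k−1} + r^k|, and define Δ^k = Clip_{(1−γ)G/γ}(Δ^{k−1} + r^k − h^k). Then for every k = 1,…,K: (i) esssup_α |Δ^k| ≤ (1−γ)G/γ and, α-almost everywhere, Δ^k = Δ^{k−1} + r^k − h^k (i.e. the clipping in the residual update is inactive α-almost everywhere); and (ii) esssup_α |h^k| ≤ (2−γ)G/γ, so Clip_{(2−γ)G/γ}(h^k) = h^k α-almost everywhere. -/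

import Mathlib

/-!
The clipping keeps every residual in `[-R, R]` with `R = (1 - γ)G/γ`, so `|Δ^{k-1} + r^k| ≤ R + G = G/γ`
almost everywhere. The oracle then puts `h^k` within `(1 - γ)G/γ = R` of `Δ^{k-1} + r^k`, so the
clipping at level `R` changes nothing, and `|h^k| ≤ R + G/γ = (2 - γ)G/γ`.
-/

open MeasureTheory Filter

/-- The clipping operator `Clip_R(f)(x) = max(min(f(x), R), −R)`. -/
def Clip {X : Type*} (R : ℝ) (f : X → ℝ) : X → ℝ :=
  fun x => max (min (f x) R) (-R)

section Clip

variable {X : Type*} {R : ℝ}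

lemma abs_clip_le (hR : 0 ≤ R) (f : X → ℝ) (x : X) : |Clip R f x| ≤ R :=
  abs_le.mpr ⟨le_max_right _ _, max_le (min_le_right _ _) (by linarith)⟩

lemma clip_eq_self_of_abs_le {f : X → ℝ} {x : X} (h : |f x| ≤ R) : Clip R f x = f x := by
  obtain ⟨hlow, hup⟩ := abs_le.mp h
  rw [Clip, min_eq_left hup, max_eq_left hlow]

end Clip

section EssSup

variable {X : Type*} [MeasurableSpace X] {μ : Measure X}

lemma essSup_abs_le_of_ae_le [NeZero μ] {f : X → ℝ} {c : ℝ} (h : ∀ᵐ x ∂μ, |f x| ≤ c) :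
    essSup (fun x => |f x|) μ ≤ c :=
  essSup_le_of_ae_le c h (isCoboundedUnder_le_of_le _ fun x => abs_nonneg (f x))

lemma ae_le_of_essSup_le {f : X → ℝ} {c : ℝ} (hf : ∃ M, ∀ x, f x ≤ M)
    (h : essSup f μ ≤ c) : ∀ᵐ x ∂μ, f x ≤ c :=
  (ae_le_essSup (isBoundedUnder_of hf)).mono fun _ hx => hx.trans h

lemma ae_abs_sub_le_of_essSup_abs_sub_le [NeZero μ] {s h : X → ℝ} {κ B : ℝ} (hκ : 0 ≤ κ)
    (hs : ∃ M, ∀ x, |s x| ≤ M) (hh : ∃ M, ∀ x, |h x| ≤ M) (hsB : ∀ᵐ x ∂μ, |s x| ≤ B)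
    (hrel : essSup (fun x => |h x - s x|) μ ≤ κ * essSup (fun x => |s x|) μ) :
    ∀ᵐ x ∂μ, |h x - s x| ≤ κ * B := by
  obtain ⟨Ms, hMs⟩ := hs
  obtain ⟨Mh, hMh⟩ := hh
  have hbdd : ∀ x, |h x - s x| ≤ Mh + Ms :=
    fun x => (abs_sub _ _).trans (add_le_add (hMh x) (hMs x))
  refine ae_le_of_essSup_le ⟨_, hbdd⟩ (hrel.trans ?_)
  exact mul_le_mul_of_nonneg_left (essSup_abs_le_of_ae_le hsB) hκ

end EssSup

lemma abs_residual_le {X : Type*} {R : ℝ} (hR : 0 ≤ R) {K : ℕ} {Δ r h : ℕ → X → ℝ}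
    (hΔ0 : Δ 0 = fun _ => 0)
    (hres : ∀ k ∈ Finset.Icc 1 K, Δ k = Clip R (fun x => Δ (k - 1) x + r k x - h k x))
    {k : ℕ} (hk : k ≤ K) (x : X) : |Δ k x| ≤ R := by
  rcases Nat.eq_zero_or_pos k with rfl | hpos
  · simpa [hΔ0] using hR
  · rw [hres k (Finset.mem_Icc.mpr ⟨hpos, hk⟩)]
    exact abs_clip_le hR _ x

/-- Boundedness of the FFGB.C residuals and weak learner outputs: the clipping
in the residual update is inactive `α`-a.e., `esssup_α |Δ^k| ≤ (1−γ)G/γ`,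
`esssup_α |h^k| ≤ (2−γ)G/γ`, and `Clip_{(2−γ)G/γ}(h^k) = h^k` `α`-a.e. -/
theorem ffgbc_residual_boundedness
    {X : Type*} [MeasurableSpace X] (α : Measure X) [IsProbabilityMeasure α]
    (G γ : ℝ) (hG : 0 ≤ G) (hγ0 : 0 < γ) (hγ1 : γ ≤ 1) (K : ℕ)
    (Δ r h : ℕ → X → ℝ)
    (hΔ0 : Δ 0 = fun _ => 0)
    -- all functions are bounded and measurable
    (hrm : ∀ k ∈ Finset.Icc 1 K, Measurable (r k) ∧ ∃ M : ℝ, ∀ x, |r k x| ≤ M)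
    (hhm : ∀ k ∈ Finset.Icc 1 K, Measurable (h k) ∧ ∃ M : ℝ, ∀ x, |h k x| ≤ M)
    -- the subgradients are `G`-bounded
    (hrG : ∀ k ∈ Finset.Icc 1 K, essSup (fun x => |r k x|) α ≤ G)
    -- weak learning oracle property
    (horacle : ∀ k ∈ Finset.Icc 1 K,
      essSup (fun x => |h k x - (Δ (k - 1) x + r k x)|) α
        ≤ (1 - γ) * essSup (fun x => |Δ (k - 1) x + r k x|) α)
    -- clipped residual update
    (hres : ∀ k ∈ Finset.Icc 1 K,
      Δ k = Clip ((1 - γ) * G / γ) (fun x => Δ (k - 1) x + r k x - h k x)) :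
    ∀ k ∈ Finset.Icc 1 K,
      essSup (fun x => |Δ k x|) α ≤ (1 - γ) * G / γ
      ∧ (∀ᵐ x ∂α, Δ k x = Δ (k - 1) x + r k x - h k x)
      ∧ essSup (fun x => |h k x|) α ≤ (2 - γ) * G / γ
      ∧ (∀ᵐ x ∂α, Clip ((2 - γ) * G / γ) (h k) x = h k x) := by
  intro k hk
  set R := (1 - γ) * G / γ with hR_def
  have hR : 0 ≤ R := div_nonneg (mul_nonneg (by linarith) hG) hγ0.le
  have hprev : ∀ x, |Δ (k - 1) x| ≤ R :=
    abs_residual_le hR hΔ0 hres (by have := (Finset.mem_Icc.mp hk).2; omega)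
  obtain ⟨-, Mr, hMr⟩ := hrm k hk
  have hr : ∀ᵐ x ∂α, |r k x| ≤ G := ae_le_of_essSup_le ⟨Mr, hMr⟩ (hrG k hk)
  have hsum : ∀ᵐ x ∂α, |Δ (k - 1) x + r k x| ≤ G / γ := by
    have hRG : R + G = G / γ := by rw [hR_def]; field_simp; ring
    filter_upwards [hr] with x hx
    linarith [abs_add_le (Δ (k - 1) x) (r k x), hprev x]
  have herr : ∀ᵐ x ∂α, |h k x - (Δ (k - 1) x + r k x)| ≤ R := by
    have := ae_abs_sub_le_of_essSup_abs_sub_le (sub_nonneg.mpr hγ1)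
      ⟨R + Mr, fun x => (abs_add_le _ _).trans (add_le_add (hprev x) (hMr x))⟩
      (hhm k hk).2 hsum (horacle k hk)
    rwa [hR_def, mul_div_assoc]
  have hinactive : ∀ᵐ x ∂α, Δ k x = Δ (k - 1) x + r k x - h k x := by
    filter_upwards [herr] with x hx
    rw [hres k hk]
    exact clip_eq_self_of_abs_le (by rwa [abs_sub_comm])
  have hh : ∀ᵐ x ∂α, |h k x| ≤ (2 - γ) * G / γ := by
    have hRG : R + G / γ = (2 - γ) * G / γ := by rw [hR_def]; field_simp; ring
    filter_upwards [herr, hsum] with x hx hxs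
    linarith [abs_sub_abs_le_abs_sub (h k x) (Δ (k - 1) x + r k x)]
  refine ⟨essSup_abs_le_of_ae_le (ae_of_all _ fun x => ?_), hinactive,
    essSup_abs_le_of_ae_le hh, hh.mono fun _ => clip_eq_self_of_abs_le⟩
  rw [hres k hk]
  exact abs_clip_le hR _ x
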